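/- For every integer n ≥ 1, the function Ũ_n(x) = sqrt(2/π) (1-x²)^(1/4) U_n(x), where U_n is the degree-n Chebyshev polynomial of the second kind, satisfies (2/π)·sqrt(n) ≤ sup_{x ∈ [-1,1]} |Ũ_n(x)| ≤ sqrt(4(n+1)/π). -/
import Mathlib


open Polynomial Real

lemma abs_sin_nat_mul_le' (m : ℕ) (θ : ℝ) : |Real.sin (m * θ)| ≤ m * |Real.sin θ| := by
  induction m with
  | zero => simp
  | succ k ih =>
    push_cast
    have h : ((k : ℝ) + 1) * θ = k * θ + θ := by ring
    rw [h, Real.sin_add]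
    calc |Real.sin (k*θ) * Real.cos θ + Real.cos (k*θ) * Real.sin θ|
        ≤ |Real.sin (k*θ) * Real.cos θ| + |Real.cos (k*θ) * Real.sin θ| := abs_add_le _ _
      _ ≤ |Real.sin (k*θ)| * 1 + 1 * |Real.sin θ| := by
          rw [abs_mul, abs_mul]
          gcongr
          · exact Real.abs_cos_le_one θ
          · exact Real.abs_cos_le_one _
      _ ≤ (k : ℝ) * |Real.sin θ| + 1 * |Real.sin θ| := by
          rw [mul_one]; gcongr
      _ = ((k : ℝ) + 1) * |Real.sin θ| := by ring

/-- `Ũ_n(x) = √(2/π) (1-x²)^{1/4} U_n(x)` where `U_n` is the Chebyshev polynomial of the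
second kind. -/
noncomputable def UTilde (n : ℕ) (x : ℝ) : ℝ :=
  Real.sqrt (2 / Real.pi) * (1 - x ^ 2) ^ ((1 : ℝ) / 4) *
    (Polynomial.Chebyshev.U ℝ (n : ℤ)).eval x

/-- Uniform norm bounds for `Ũ_n`: `(2/π)√n ≤ ‖Ũ_n‖_∞ ≤ √(4(n+1)/π)`. -/
theorem UTilde_sup_bounds (n : ℕ) (hn : 1 ≤ n) :
    (∃ x ∈ Set.Icc (-1 : ℝ) 1, (2 / Real.pi) * Real.sqrt n ≤ |UTilde n x|) ∧
    (∀ x ∈ Set.Icc (-1 : ℝ) 1, |UTilde n x| ≤ Real.sqrt (4 * ((n : ℝ) + 1) / Real.pi)) := by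
  have hπ : (0:ℝ) < π := Real.pi_pos
  constructor
  · -- lower bound
    set θ : ℝ := π / (2 * ((n:ℝ) + 1)) with hθdef
    have hnp : (0:ℝ) < (n:ℝ) + 1 := by positivity
    have hθpos : 0 < θ := by positivity
    have hθlt : θ < π := by
      rw [hθdef, div_lt_iff₀ (by positivity)]
      nlinarith
    have hs : 0 < Real.sin θ := Real.sin_pos_of_pos_of_lt_pi hθpos hθlt
    refine ⟨Real.cos θ, ⟨Real.neg_one_le_cos θ, Real.cos_le_one θ⟩, ?_⟩
    have hU : (Polynomial.Chebyshev.U ℝ (n : ℤ)).eval (Real.cos θ) * Real.sin θ = 1 := by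
      rw [Polynomial.Chebyshev.U_real_cos θ (n : ℤ)]
      have h2 : (((n:ℤ):ℝ) + 1) * θ = π / 2 := by
        push_cast
        rw [hθdef]
        field_simp
      rw [h2, Real.sin_pi_div_two]
    have heval : (Polynomial.Chebyshev.U ℝ (n : ℤ)).eval (Real.cos θ) = 1 / Real.sin θ := by
      rw [eq_div_iff hs.ne']; exact hU
    have h1c : 1 - Real.cos θ ^ 2 = Real.sin θ ^ 2 := by
      have := Real.sin_sq_add_cos_sq θ; linarith
    have hrt : (Real.sin θ ^ 2 : ℝ) ^ ((1:ℝ)/4) = Real.sqrt (Real.sin θ) := by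
      rw [← Real.rpow_natCast (Real.sin θ) 2, ← Real.rpow_mul hs.le, Real.sqrt_eq_rpow]
      norm_num
    have hval : UTilde n (Real.cos θ) = Real.sqrt (2/π) / Real.sqrt (Real.sin θ) := by
      rw [UTilde, heval, h1c, hrt]
      rw [mul_one_div, div_eq_div_iff hs.ne' (Real.sqrt_pos.2 hs).ne', mul_assoc,
        Real.mul_self_sqrt hs.le]
    rw [hval, abs_of_nonneg (by positivity)]
    have hsqs : 0 < Real.sqrt (Real.sin θ) := Real.sqrt_pos.2 hs
    rw [le_div_iff₀ hsqs]
    have h1 : Real.sqrt (Real.sin θ) ≤ Real.sqrt θ := Real.sqrt_le_sqrt (Real.sin_le hθpos.le)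
    have ha : (2/π) * Real.sqrt n = Real.sqrt ((4*(n:ℝ))/π^2) := by
      rw [show (4*(n:ℝ))/π^2 = (2/π)^2 * n by rw [div_pow]; ring]
      rw [Real.sqrt_mul (by positivity), Real.sqrt_sq (by positivity)]
    calc (2/π) * Real.sqrt n * Real.sqrt (Real.sin θ)
        ≤ (2/π) * Real.sqrt n * Real.sqrt θ := by gcongr
      _ = Real.sqrt ((4*(n:ℝ))/π^2 * θ) := by
          rw [ha, ← Real.sqrt_mul (by positivity)]
      _ ≤ Real.sqrt (2/π) := by
          apply Real.sqrt_le_sqrt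
          rw [hθdef, div_mul_div_comm, div_le_div_iff₀ (by positivity) hπ]
          nlinarith [sq_nonneg π]
  · -- upper bound
    rintro x ⟨hx1, hx2⟩
    have h1x : (0:ℝ) ≤ 1 - x^2 := by nlinarith
    set θ : ℝ := Real.arccos x with hθdef
    have hcos : Real.cos θ = x := Real.cos_arccos hx1 hx2
    have hsin : Real.sin θ = Real.sqrt (1 - x^2) := by
      rw [hθdef, Real.sin_arccos]
    have hs0 : 0 ≤ Real.sin θ := by rw [hsin]; positivity
    have hs2 : Real.sin θ ^ 2 = 1 - x^2 := by rw [hsin, Real.sq_sqrt h1x]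
    rcases eq_or_lt_of_le hs0 with hz | hs
    · -- sin θ = 0, x = ±1
      have : 1 - x^2 = 0 := by rw [← hs2, ← hz]; ring
      rw [UTilde, this, Real.zero_rpow (by norm_num)]
      simp [Real.sqrt_nonneg]
    · have heval : (Polynomial.Chebyshev.U ℝ (n : ℤ)).eval x
          = Real.sin ((((n:ℤ):ℝ) + 1) * θ) / Real.sin θ := by
        rw [eq_div_iff hs.ne', ← hcos]
        exact Polynomial.Chebyshev.U_real_cos θ (n : ℤ)
      set A : ℝ := |Real.sin ((((n:ℤ):ℝ) + 1) * θ)| with hA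
      have hA1 : A ≤ 1 := Real.abs_sin_le_one _
      have hA2 : A ≤ ((n:ℝ)+1) * Real.sin θ := by
        have := abs_sin_nat_mul_le' (n+1) θ
        push_cast at this ⊢
        rwa [abs_of_nonneg hs0] at this
      have hA0 : 0 ≤ A := abs_nonneg _
      have hrt : ((1 : ℝ) - x^2) ^ ((1:ℝ)/4) = Real.sqrt (Real.sin θ) := by
        rw [← hs2, ← Real.rpow_natCast (Real.sin θ) 2, ← Real.rpow_mul hs0, Real.sqrt_eq_rpow]
        norm_num
      have habs : |UTilde n x| = Real.sqrt (2/π) * Real.sqrt (Real.sin θ) * (A / Real.sin θ) := by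
        rw [UTilde, heval, hrt, abs_mul, abs_mul, abs_div,
          abs_of_nonneg (Real.sqrt_nonneg _), abs_of_nonneg (Real.sqrt_nonneg _),
          abs_of_pos hs]
      rw [habs, Real.le_sqrt (by positivity) (by positivity)]
      have expand : (Real.sqrt (2/π) * Real.sqrt (Real.sin θ) * (A / Real.sin θ))^2
          = (2/π) * (A^2 / Real.sin θ) := by
        rw [mul_pow, mul_pow, Real.sq_sqrt (by positivity), Real.sq_sqrt hs0]
        field_simp
      rw [expand]
      calc (2/π) * (A^2 / Real.sin θ) ≤ (2/π) * ((n:ℝ)+1) := by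
            apply mul_le_mul_of_nonneg_left _ (by positivity)
            rw [div_le_iff₀ hs]
            nlinarith
        _ = 2 * ((n:ℝ)+1) / π := by ring
        _ ≤ 4 * ((n:ℝ)+1) / π := by
            gcongr
            nlinarith [Nat.cast_nonneg (α := ℝ) n]
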